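/- Let k ≥ 1, let r be an odd integer, and let b, c be nonzero integers with dyadic valuations satisfying v(c) < v(b) < k. Define the Gauss sum G(b,c) = ∑_{z mod 2^k} e(r(−bz² + 2cz)/2^k). Then G(b,c) = 2^k if v(b) = k−1 and v(c) = k−2, and G(b,c) = 0 otherwise. -/

import Mathlib

open Complex Finset

/-- `e(x) = exp(2πix)`. -/
noncomputable def eC (x : ℂ) : ℂ := Complex.exp (2 * Real.pi * Complex.I * x)

/-- The Gauss sum `G(b,c) = ∑_{z mod 2^k} e(r(-bz² + 2cz)/2^k)`. -/
noncomputable def gaussG (k : ℕ) (r b c : ℤ) : ℂ :=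
  ∑ z ∈ Finset.range (2 ^ k), eC ((r : ℂ) * (-(b : ℂ) * (z : ℂ) ^ 2 + 2 * (c : ℂ) * (z : ℂ)) / (2 ^ k : ℂ))

lemma eC_add (x y : ℂ) : eC (x + y) = eC x * eC y := by
  simp [eC, mul_add, Complex.exp_add]

lemma eC_int (n : ℤ) : eC (n : ℂ) = 1 := by
  rw [eC, show 2 * (Real.pi : ℂ) * Complex.I * n = n * (2 * Real.pi * Complex.I) by ring]
  exact Complex.exp_int_mul_two_pi_mul_I n

lemma eC_two_pi_I_ne_zero : 2 * (Real.pi : ℂ) * Complex.I ≠ 0 := by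
  simp [Real.pi_ne_zero, Complex.I_ne_zero, Complex.ofReal_ne_zero]

lemma eC_eq_one_iff (x : ℂ) : eC x = 1 ↔ ∃ n : ℤ, x = (n : ℂ) := by
  rw [eC, Complex.exp_eq_one_iff]
  constructor
  · rintro ⟨n, hn⟩
    exact ⟨n, mul_left_cancel₀ eC_two_pi_I_ne_zero (by linear_combination hn)⟩
  · rintro ⟨n, hn⟩
    exact ⟨n, by rw [hn]; ring⟩

lemma eC_pow (x : ℂ) (n : ℕ) : eC x ^ n = eC (n * x) := by
  rw [eC, eC, ← Complex.exp_nat_mul]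
  congr 1
  ring

/-- Geometric sum of `2^k`-th roots of unity. -/
lemma geom_eC (k : ℕ) (m : ℤ) :
    ∑ z ∈ Finset.range (2 ^ k), eC ((m : ℂ) * (z : ℂ) / (2 ^ k : ℂ)) =
      if (2 : ℤ) ^ k ∣ m then (2 ^ k : ℂ) else 0 := by
  have h2 : (2 : ℂ) ≠ 0 := two_ne_zero
  have h2k : ((2 : ℂ) ^ k) ≠ 0 := pow_ne_zero _ h2
  by_cases h : (2 : ℤ) ^ k ∣ m
  · rw [if_pos h]
    obtain ⟨n, hn⟩ := h
    have key : ∀ z ∈ Finset.range (2 ^ k), eC ((m : ℂ) * (z : ℂ) / (2 ^ k : ℂ)) = 1 := by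
      intro z _
      have harg : (m : ℂ) * (z : ℂ) / (2 ^ k : ℂ) = ((n * z : ℤ) : ℂ) := by
        rw [hn]
        push_cast
        field_simp
      rw [harg, eC_int]
    rw [Finset.sum_congr rfl key]
    simp
  · rw [if_neg h]
    set ζ := eC ((m : ℂ) / (2 ^ k : ℂ)) with hζ
    have hz : ∀ z ∈ Finset.range (2 ^ k), eC ((m : ℂ) * (z : ℂ) / (2 ^ k : ℂ)) = ζ ^ z := by
      intro z _
      rw [hζ, eC_pow]
      congr 1
      ring
    have hζ1 : ζ ≠ 1 := by
      rw [hζ, Ne, eC_eq_one_iff]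
      rintro ⟨n, hn⟩
      apply h
      refine ⟨n, ?_⟩
      have : (m : ℂ) = ((2 : ℤ) ^ k * n : ℤ) := by
        push_cast
        field_simp at hn
        linear_combination hn
      exact_mod_cast this
    have hζN : ζ ^ (2 ^ k) = 1 := by
      rw [hζ, eC_pow]
      have : ((2 ^ k : ℕ) : ℂ) * ((m : ℂ) / (2 ^ k : ℂ)) = ((m : ℤ) : ℂ) := by
        push_cast
        field_simp
      rw [this, eC_int]
    rw [Finset.sum_congr rfl hz, geom_sum_eq hζ1, hζN]
    simp

/-- Shifting a sum of a periodic function by one. -/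
lemma sum_shift_one (g : ℕ → ℂ) (N : ℕ) (hp : ∀ z, g (z + N) = g z) :
    ∑ z ∈ Finset.range N, g (z + 1) = ∑ z ∈ Finset.range N, g z := by
  rcases Nat.eq_zero_or_pos N with h | h
  · simp [h]
  obtain ⟨n, rfl⟩ := Nat.exists_eq_succ_of_ne_zero h.ne'
  rw [Finset.sum_range_succ fun z => g (z + 1), Finset.sum_range_succ' g n]
  congr 1
  simpa using hp 0

/-- Shifting a sum of a periodic function. -/
lemma sum_shift (g : ℕ → ℂ) (N : ℕ) (hp : ∀ z, g (z + N) = g z) (t : ℕ) :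
    ∑ z ∈ Finset.range N, g (z + t) = ∑ z ∈ Finset.range N, g z := by
  induction t with
  | zero => simp
  | succ t ih =>
    have h1 := sum_shift_one (fun z => g (z + t)) N (fun z => by
      show g (z + N + t) = g (z + t)
      rw [show z + N + t = z + t + N from by omega]
      exact hp (z + t))
    calc ∑ z ∈ Finset.range N, g (z + (t + 1))
        = ∑ z ∈ Finset.range N, g (z + 1 + t) :=
          Finset.sum_congr rfl fun z _ => congrArg g (by omega)
      _ = ∑ z ∈ Finset.range N, g (z + t) := h1
      _ = ∑ z ∈ Finset.range N, g z := ih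

/-- Decomposition of a nonzero integer into its dyadic part and an odd part. -/
lemma exists_odd_decomp (x : ℤ) (hx : x ≠ 0) :
    ∃ x₀ : ℤ, Odd x₀ ∧ x = 2 ^ padicValInt 2 x * x₀ := by
  haveI : Fact (Nat.Prime 2) := ⟨Nat.prime_two⟩
  obtain ⟨x₀, hx₀⟩ := padicValInt_dvd (p := 2) x
  push_cast at hx₀
  refine ⟨x₀, ?_, hx₀⟩
  rw [← Int.not_even_iff_odd]
  rintro ⟨y, hy⟩
  have hdvd : ((2 : ℕ) : ℤ) ^ (padicValInt 2 x + 1) ∣ x := by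
    refine ⟨y, ?_⟩
    push_cast
    rw [pow_succ]
    calc x = 2 ^ padicValInt 2 x * x₀ := hx₀
      _ = 2 ^ padicValInt 2 x * (y + y) := by rw [hy]
      _ = 2 ^ padicValInt 2 x * 2 * y := by ring
  rw [padicValInt_dvd_iff] at hdvd
  omega

lemma shift_arg_identity (P Q R rr bb cc zz : ℂ) (hP : P ≠ 0) (hQ : Q ≠ 0) (hR : R ≠ 0) :
    rr * (-(P * Q * 2 * bb) * (zz + R * 2) ^ 2 + 2 * (P * cc) * (zz + R * 2)) / (P * Q * R * 8)
      = rr * (-(P * Q * 2 * bb) * zz ^ 2 + 2 * (P * cc) * zz) / (P * Q * R * 8)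
        + (rr * cc / (Q * 2) + (-(rr * bb * zz) - rr * bb * R)) := by
  have h8 : P * Q * R * 8 ≠ 0 :=
    mul_ne_zero (mul_ne_zero (mul_ne_zero hP hQ) hR) (by norm_num)
  have hQ2 : Q * 2 ≠ 0 := mul_ne_zero hQ (by norm_num)
  have hstep : rr * cc / (Q * 2) = rr * cc * (P * R * 4) / (P * Q * R * 8) := by
    rw [div_eq_div_iff hQ2 h8]; ring
  rw [hstep, ← add_assoc, ← add_div, div_add' _ _ _ h8, div_eq_div_iff h8 h8]
  ring

/-- if `v(c) < v(b) < k` (dyadic valuations), then `G(b,c) = 2^k` when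
`v(b) = k - 1` and `v(c) = k - 2`, and `G(b,c) = 0` otherwise. -/
theorem gauss_sum_eval (k : ℕ) (hk : 1 ≤ k) (r b c : ℤ) (hr : Odd r)
    (hb : b ≠ 0) (hc : c ≠ 0)
    (hcb : padicValInt 2 c < padicValInt 2 b) (hbk : padicValInt 2 b < k) :
    gaussG k r b c =
      if padicValInt 2 b = k - 1 ∧ padicValInt 2 c = k - 2 then (2 ^ k : ℂ) else 0 := by
  obtain ⟨b₀, hb₀, hbe⟩ := exists_odd_decomp b hb
  obtain ⟨c₀, hc₀, hce⟩ := exists_odd_decomp c hc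
  generalize hβd : padicValInt 2 b = β at hbe hcb hbk ⊢
  generalize hγd : padicValInt 2 c = γ at hce hcb ⊢
  have h2 : (2 : ℂ) ≠ 0 := two_ne_zero
  have h2k : ((2 : ℂ) ^ k) ≠ 0 := pow_ne_zero _ h2
  obtain ⟨d, hd⟩ : ∃ d, β = γ + d + 1 := ⟨β - γ - 1, by omega⟩
  rcases Nat.lt_or_ge (β + 1) k with hlt | hge
  · -- case v(b) < k - 1 : the sum vanishes
    rw [if_neg (by omega)]
    obtain ⟨e, he⟩ : ∃ e, k = β + e + 2 := ⟨k - β - 2, by omega⟩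
    have hbC : (b : ℂ) = 2 ^ γ * 2 ^ d * 2 * b₀ := by
      rw [hbe]; push_cast; rw [hd]; ring
    have hcC : (c : ℂ) = 2 ^ γ * c₀ := by
      rw [hce]; push_cast; ring
    have hkC : ((2 : ℂ) ^ k : ℂ) = 2 ^ γ * 2 ^ d * 2 ^ e * 8 := by
      rw [show k = γ + d + e + 3 by omega]; ring
    have hpγ : ((2 : ℂ) ^ γ) ≠ 0 := pow_ne_zero _ h2
    have hpd : ((2 : ℂ) ^ d) ≠ 0 := pow_ne_zero _ h2
    have hpe : ((2 : ℂ) ^ e) ≠ 0 := pow_ne_zero _ h2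
    have hpd1 : ((2 : ℂ) ^ (d + 1)) ≠ 0 := pow_ne_zero _ h2
    set N := 2 ^ k with hN
    set g : ℕ → ℂ := fun z =>
      eC ((r : ℂ) * (-(b : ℂ) * (z : ℂ) ^ 2 + 2 * (c : ℂ) * (z : ℂ)) / (2 ^ k : ℂ)) with hg
    have hper : ∀ z, g (z + N) = g z := by
      intro z
      have harg : (r : ℂ) * (-(b : ℂ) * ((z + N : ℕ) : ℂ) ^ 2 + 2 * (c : ℂ) * ((z + N : ℕ) : ℂ)) / (2 ^ k : ℂ)
          = (r : ℂ) * (-(b : ℂ) * (z : ℂ) ^ 2 + 2 * (c : ℂ) * (z : ℂ)) / (2 ^ k : ℂ)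
            + ((r * (-(2 * b * z) - b * 2 ^ k + 2 * c) : ℤ) : ℂ) := by
        rw [hN]
        push_cast
        field_simp
        ring
      simp only [hg, harg, eC_add, eC_int, mul_one]
    set t := 2 ^ (k - 1 - β) with ht
    have htC : ((t : ℕ) : ℂ) = 2 ^ e * 2 := by
      rw [ht]
      push_cast
      rw [show k - 1 - β = e + 1 by omega]
      ring
    set ζ := eC ((r : ℂ) * (c₀ : ℂ) / 2 ^ (d + 1)) with hζ
    have hshift : ∀ z, g (z + t) = ζ * g z := by
      intro z
      have hzt : ((z + t : ℕ) : ℂ) = (z : ℂ) + 2 ^ e * 2 := by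
        push_cast
        rw [htC]
      have harg : (r : ℂ) * (-(b : ℂ) * ((z + t : ℕ) : ℂ) ^ 2 + 2 * (c : ℂ) * ((z + t : ℕ) : ℂ)) / (2 ^ k : ℂ)
          = (r : ℂ) * (-(b : ℂ) * (z : ℂ) ^ 2 + 2 * (c : ℂ) * (z : ℂ)) / (2 ^ k : ℂ)
            + ((r : ℂ) * (c₀ : ℂ) / 2 ^ (d + 1)
            + ((-(r * b₀ * z) - r * b₀ * 2 ^ e : ℤ) : ℂ)) := by
        rw [hzt, hbC, hcC, hkC]
        push_cast
        rw [pow_succ]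
        exact shift_arg_identity _ _ _ _ _ _ _ hpγ hpd hpe
      simp only [hg, harg, eC_add, eC_int, mul_one]
      ring
    have hζ1 : ζ ≠ 1 := by
      rw [hζ, Ne, eC_eq_one_iff]
      rintro ⟨n, hn⟩
      field_simp at hn
      have hint : r * c₀ = n * 2 ^ (d + 1) := by exact_mod_cast hn.trans (mul_comm _ _)
      have hodd : Odd (r * c₀) := hr.mul hc₀
      rw [hint] at hodd
      have heven : Even (n * (2 : ℤ) ^ (d + 1)) := ⟨n * 2 ^ d, by ring⟩
      exact (Int.not_odd_iff_even.mpr heven) hodd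
    have hS : ∑ z ∈ Finset.range N, g z = ζ * ∑ z ∈ Finset.range N, g z := by
      conv_lhs => rw [← sum_shift g N hper t]
      rw [Finset.sum_congr rfl (fun z _ => hshift z), ← Finset.mul_sum]
    have hzero : (1 - ζ) * (∑ z ∈ Finset.range N, g z) = 0 := by linear_combination hS
    show ∑ z ∈ Finset.range N, g z = 0
    rcases mul_eq_zero.mp hzero with h | h
    · exact absurd (by linear_combination -h) hζ1
    · exact h
  · -- case v(b) = k - 1
    have hβk : β + 1 = k := by omega
    set m : ℤ := r * (2 * c - b) with hm
    have hbC : (b : ℂ) = 2 ^ β * b₀ := by rw [hbe]; push_cast; ring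
    have hkC : ((2 : ℂ) ^ k : ℂ) = 2 ^ β * 2 := by
      rw [show k = β + 1 by omega]; ring
    have hpβ : ((2 : ℂ) ^ β) ≠ 0 := pow_ne_zero _ h2
    have key : ∀ z ∈ Finset.range (2 ^ k),
        eC ((r : ℂ) * (-(b : ℂ) * (z : ℂ) ^ 2 + 2 * (c : ℂ) * (z : ℂ)) / (2 ^ k : ℂ))
          = eC ((m : ℂ) * (z : ℂ) / (2 ^ k : ℂ)) := by
      intro z _
      obtain ⟨w, hw⟩ := Int.even_mul_succ_self ((z : ℤ) - 1)
      have hz2 : ((z : ℕ) : ℂ) ^ 2 = ((z : ℕ) : ℂ) + 2 * (w : ℂ) := by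
        have h1 : ((z : ℤ)) ^ 2 = (z : ℤ) + 2 * w := by linear_combination hw
        exact_mod_cast h1
      have harg : (r : ℂ) * (-(b : ℂ) * (z : ℂ) ^ 2 + 2 * (c : ℂ) * (z : ℂ)) / (2 ^ k : ℂ)
          = (m : ℂ) * (z : ℂ) / (2 ^ k : ℂ) + ((-(r * b₀ * w) : ℤ) : ℂ) := by
        rw [hz2, hm]
        push_cast
        rw [hbC, hkC]
        field_simp
        ring
      rw [harg, eC_add, eC_int, mul_one]
    have hsum : gaussG k r b c = if (2 : ℤ) ^ k ∣ m then (2 ^ k : ℂ) else 0 := by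
      unfold gaussG
      rw [Finset.sum_congr rfl key, geom_eC]
    rw [hsum]
    rcases Nat.eq_zero_or_pos d with hd0 | hd1
    · -- d = 0 : γ = k - 2, divisibility holds
      subst hd0
      have hdvd : (2 : ℤ) ^ k ∣ m := by
        obtain ⟨w, hw⟩ := hc₀.sub_odd hb₀
        refine ⟨r * w, ?_⟩
        have hcb2 : c₀ = b₀ + 2 * w := by linarith
        rw [hm, hbe, hce, hd, hcb2, show k = γ + 2 by omega]
        ring
      rw [if_pos hdvd, if_pos ⟨by omega, by omega⟩]
    · -- d ≥ 1 : no divisibility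
      have hnd : ¬ (2 : ℤ) ^ k ∣ m := by
        intro hdvd
        obtain ⟨d', hd'⟩ : ∃ d', d = d' + 1 := ⟨d - 1, by omega⟩
        set u : ℤ := r * (c₀ - 2 ^ d * b₀) with hu
        have hmu : m = 2 ^ (γ + 1) * u := by
          rw [hm, hu, hbe, hce, hd]
          ring
        have hodd : Odd u := by
          rw [hu]
          refine hr.mul ?_
          refine hc₀.sub_even ⟨2 ^ d' * b₀, ?_⟩
          rw [hd']
          ring
        have h2u : (2 : ℤ) ∣ u := by
          have hdd : (2 : ℤ) ^ (γ + 2) ∣ 2 ^ (γ + 1) * u := by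
            refine dvd_trans ?_ (hmu ▸ hdvd)
            exact pow_dvd_pow 2 (by omega)
          rw [pow_succ] at hdd
          exact (mul_dvd_mul_iff_left (pow_ne_zero (γ + 1) (two_ne_zero))).mp hdd
        obtain ⟨v, hv⟩ := h2u
        exact (Int.not_odd_iff_even.mpr ⟨v, by omega⟩) hodd
      rw [if_neg hnd, if_neg (by omega)]
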